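/- The refined Antimirov automaton accepts the trace closure: for every regular expression E over Σ and every word u, u ∈ [⟦E⟧] if and only if either (u = ε and E↓) or (u ≠ ε and there exist E₀, E₁ with E →^{I*} (u; [E₀, E₁]), E₀↓ and E₁↓). -/

import Mathlib

open RegularExpression
open scoped Classical

universe u

variable {α : Type u}

/-- Two words are independent if every letter of the first is independent
of every letter of the second. -/
def WIndep (I : α → α → Prop) (u v : List α) : Prop :=
  ∀ a ∈ u, ∀ b ∈ v, I a b

/-- Trace equivalence: the least equivalence relation on words containing
all pairs (x ++ [a,b] ++ y, x ++ [b,a] ++ y) with a I b. -/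
inductive TrEq (I : α → α → Prop) : List α → List α → Prop
  | swap (x y : List α) {a b : α} : I a b → TrEq I (x ++ [a, b] ++ y) (x ++ [b, a] ++ y)
  | refl (u : List α) : TrEq I u u
  | symm {u v : List α} : TrEq I u v → TrEq I v u
  | trans {u v w : List α} : TrEq I u v → TrEq I v w → TrEq I u w

/-- Trace closure of a language. -/
def TrClosure (I : α → α → Prop) (L : Set (List α)) : Set (List α) :=
  {w | ∃ z ∈ L, TrEq I w z}

/-- u ⊲ z ⊳ v with exactly n blocks of u: there are nonempty words u₁,…,uₙ and
words v₀,…,vₙ (with v₁,…,v_{n-1} nonempty) such that u = u₁⋯uₙ, v = v₀⋯vₙ,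
z = v₀u₁v₁⋯uₙvₙ and vⱼ I uᵢ whenever j < i. -/
def ScatN (I : α → α → Prop) (n : ℕ) (u z v : List α) : Prop :=
  ∃ us vs : ℕ → List α,
    (∀ i, 1 ≤ i → i ≤ n → us i ≠ []) ∧
    (∀ j, 1 ≤ j → j ≤ n - 1 → vs j ≠ []) ∧
    u = ((List.range n).map (fun i => us (i + 1))).flatten ∧
    v = ((List.range (n + 1)).map vs).flatten ∧
    z = vs 0 ++ ((List.range n).map (fun i => us (i + 1) ++ vs (i + 1))).flatten ∧
    (∀ i j, 1 ≤ i → i ≤ n → j < i → WIndep I (vs j) (us i))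

/-- u ⊲ z ⊳ v -/
def Scat (I : α → α → Prop) (u z v : List α) : Prop :=
  ∃ n, ScatN I n u z v

/-- u ∼⊲ z ⊳ v -/
def EqScat (I : α → α → Prop) (u z v : List α) : Prop :=
  ∃ u', TrEq I u u' ∧ Scat I u' z v

/-- u ∼⊲ z ⊳∼ v -/
def EqScatEq (I : α → α → Prop) (u z v : List α) : Prop :=
  ∃ u' v', TrEq I u u' ∧ Scat I u' z v' ∧ TrEq I v' v

/-- u ∼⊲_N z ⊳∼ v : as EqScatEq, with the number of blocks bounded by N -/
def EqScatEqLe (I : α → α → Prop) (N : ℕ) (u z v : List α) : Prop :=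
  ∃ u' v', TrEq I u u' ∧ (∃ n ≤ N, ScatN I n u' z v') ∧ TrEq I v' v

/-- Reordering concatenation of words. -/
def rconc (I : α → α → Prop) : List α → List α → Set (List α)
  | [], v => {v}
  | a :: u, [] => {a :: u}
  | a :: u, b :: v =>
      (List.cons a) '' rconc I u (b :: v) ∪
      {z | WIndep I (a :: u) [b] ∧ ∃ w ∈ rconc I (a :: u) v, z = b :: w}
termination_by u v => u.length + v.length

/-- Reordering concatenation lifted to languages. -/
def rconcL (I : α → α → Prop) (L L' : Set (List α)) : Set (List α) :=
  {z | ∃ u ∈ L, ∃ v ∈ L', z ∈ rconc I u v}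

/-- The reorderable part of a language w.r.t. a word. -/
def RPart (I : α → α → Prop) (u : List α) (L : Set (List α)) : Set (List α) :=
  {v ∈ L | WIndep I v u}

/-- The reordering derivative of a language along a word. -/
def RDeriv (I : α → α → Prop) (u : List α) (L : Set (List α)) : Set (List α) :=
  {v | ∃ z ∈ L, EqScat I u z v}

/-- Syntactic reorderable part of a regexp w.r.t. a letter. -/
noncomputable def Rexp (I : α → α → Prop) (a : α) : RegularExpression α → RegularExpression α
  | zero => zero
  | epsilon => epsilon
  | char b => if I a b then char b else zero
  | plus E F => plus (Rexp I a E) (Rexp I a F)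
  | comp E F => comp (Rexp I a E) (Rexp I a F)
  | RegularExpression.star E => star (Rexp I a E)

/-- Brzozowski reordering derivative of a regexp along a letter. -/
noncomputable def Dexp (I : α → α → Prop) (a : α) : RegularExpression α → RegularExpression α
  | zero => zero
  | epsilon => zero
  | char b => if a = b then epsilon else zero
  | plus E F => plus (Dexp I a E) (Dexp I a F)
  | comp E F => plus (comp (Dexp I a E) F) (comp (Rexp I a E) (Dexp I a F))
  | RegularExpression.star E => comp (star (Rexp I a E)) (comp (Dexp I a E) (star E))

/-- Syntactic reorderable part along a word. -/
noncomputable def RexpW (I : α → α → Prop) (u : List α) (E : RegularExpression α) :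
    RegularExpression α :=
  u.foldl (fun E a => Rexp I a E) E

/-- Brzozowski reordering derivative along a word. -/
noncomputable def DexpW (I : α → α → Prop) (u : List α) (E : RegularExpression α) :
    RegularExpression α :=
  u.foldl (fun E a => Dexp I a E) E

/-- Antimirov reordering parts-of-derivatives along a letter. -/
inductive Antim (I : α → α → Prop) : RegularExpression α → α → RegularExpression α → Prop
  | chr (a : α) : Antim I (char a) a epsilon
  | plusL {E F : RegularExpression α} {a E'} : Antim I E a E' → Antim I (plus E F) a E'
  | plusR {E F : RegularExpression α} {a F'} : Antim I F a F' → Antim I (plus E F) a F'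
  | compL {E F : RegularExpression α} {a E'} : Antim I E a E' → Antim I (comp E F) a (comp E' F)
  | compR {E F : RegularExpression α} {a F'} :
      Antim I F a F' → Antim I (comp E F) a (comp (Rexp I a E) F')
  | st {E : RegularExpression α} {a E'} :
      Antim I E a E' → Antim I (star E) a (comp (star (Rexp I a E)) (comp E' (star E)))

/-- Antimirov reordering parts-of-derivatives along a word. -/
inductive AntimW (I : α → α → Prop) : RegularExpression α → List α → RegularExpression α → Prop
  | nil (E : RegularExpression α) : AntimW I E [] E
  | snoc {E : RegularExpression α} {u E' a E''} :
      AntimW I E u E' → Antim I E' a E'' → AntimW I E (u ++ [a]) E''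

/-- The dependence graph of a word: vertices are positions; distinct positions
are adjacent when their letters are not independent. -/
def depGraph (I : α → α → Prop) (w : List α) : SimpleGraph (Fin w.length) where
  Adj i j := i ≠ j ∧ ¬(I (w.get i) (w.get j) ∧ I (w.get j) (w.get i))
  symm := by
    constructor
    intro i j h
    exact ⟨h.1.symm, fun hc => h.2 ⟨hc.2, hc.1⟩⟩
  loopless := by
    constructor
    intro i h
    exact h.1 rfl

/-- A word is connected if its dependence graph is connected. -/
def WordConnected (I : α → α → Prop) (w : List α) : Prop :=
  (depGraph I w).Preconnected

/-- Least fixed point star for the trace-closing semantics. -/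
def starI (I : α → α → Prop) (L : Set (List α)) : Set (List α) :=
  sInf {X | {([] : List α)} ∪ rconcL I L X ⊆ X}

/-- Trace-closing semantics of regular expressions. -/
def langI (I : α → α → Prop) : RegularExpression α → Set (List α)
  | zero => ∅
  | epsilon => {[]}
  | char a => {[a]}
  | plus E F => langI I E ∪ langI I F
  | comp E F => rconcL I (langI I E) (langI I F)
  | RegularExpression.star E => starI I (langI I E)

/-- L has (scattering) rank at most N. -/
def HasRankLe (I : α → α → Prop) (L : Set (List α)) (N : ℕ) : Prop :=
  ∀ u v, u ++ v ∈ TrClosure I L → ∃ z ∈ L, EqScatEqLe I N u z v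

/-- L has uniform (scattering) rank at most N. -/
def HasUniformRankLe (I : α → α → Prop) (L : Set (List α)) (N : ℕ) : Prop :=
  ∀ w ∈ TrClosure I L, ∃ z ∈ L, ∀ u v, w = u ++ v → EqScatEqLe I N u z v

/-- Star-connected regular expressions. -/
inductive StarConnected (I : α → α → Prop) : RegularExpression α → Prop
  | zero : StarConnected I zero
  | epsilon : StarConnected I epsilon
  | chr (a : α) : StarConnected I (char a)
  | plus {E F : RegularExpression α} :
      StarConnected I E → StarConnected I F → StarConnected I (plus E F)
  | comp {E F : RegularExpression α} :
      StarConnected I E → StarConnected I F → StarConnected I (comp E F)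
  | st {E : RegularExpression α} :
      StarConnected I E → (∀ w ∈ E.matches', WordConnected I w) → StarConnected I (star E)

/-- Refined Antimirov reordering parts-of-derivatives along a letter. -/
inductive RAntim (I : α → α → Prop) :
    RegularExpression α → α → RegularExpression α → RegularExpression α → Prop
  | chr (a : α) : RAntim I (char a) a epsilon epsilon
  | plusL {E F : RegularExpression α} {a El Er} :
      RAntim I E a El Er → RAntim I (plus E F) a El Er
  | plusR {E F : RegularExpression α} {a Fl Fr} :
      RAntim I F a Fl Fr → RAntim I (plus E F) a Fl Fr
  | compL {E F : RegularExpression α} {a El Er} :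
      RAntim I E a El Er → RAntim I (comp E F) a El (comp Er F)
  | compR {E F : RegularExpression α} {a Fl Fr} :
      RAntim I F a Fl Fr → RAntim I (comp E F) a (comp (Rexp I a E) Fl) Fr
  | st {E : RegularExpression α} {a El Er} :
      RAntim I E a El Er →
      RAntim I (star E) a (comp (star (Rexp I a E)) El) (comp Er (star E))

/-- Refined Antimirov relation lifted to nonempty lists of regexps (unbounded). -/
inductive RAntimL (I : α → α → Prop) :
    List (RegularExpression α) → α → List (RegularExpression α) → Prop
  | split {Γ Δ : List (RegularExpression α)} {E : RegularExpression α} {a El Er} :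
      RAntim I E a El Er →
      RAntimL I (Γ ++ E :: Δ) a (Γ.map (Rexp I a) ++ El :: Er :: Δ)
  | dropL {Γ Δ : List (RegularExpression α)} {E : RegularExpression α} {a El Er} :
      RAntim I E a El Er → [] ∈ El.matches' → Γ ≠ [] →
      RAntimL I (Γ ++ E :: Δ) a (Γ.map (Rexp I a) ++ Er :: Δ)
  | dropR {Γ Δ : List (RegularExpression α)} {E : RegularExpression α} {a El Er} :
      RAntim I E a El Er → [] ∈ Er.matches' → Δ ≠ [] →
      RAntimL I (Γ ++ E :: Δ) a (Γ.map (Rexp I a) ++ El :: Δ)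
  | dropBoth {Γ Δ : List (RegularExpression α)} {E : RegularExpression α} {a El Er} :
      RAntim I E a El Er → [] ∈ El.matches' → [] ∈ Er.matches' → Γ ≠ [] → Δ ≠ [] →
      RAntimL I (Γ ++ E :: Δ) a (Γ.map (Rexp I a) ++ Δ)

/-- Refined Antimirov relation along a word (unbounded). -/
inductive RAntimW (I : α → α → Prop) :
    RegularExpression α → List α → List (RegularExpression α) → Prop
  | nil (E : RegularExpression α) : RAntimW I E [] [E]
  | snoc {E : RegularExpression α} {u Γ a Γ'} :
      RAntimW I E u Γ → RAntimL I Γ a Γ' → RAntimW I E (u ++ [a]) Γ'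

/-- N-bounded refined Antimirov relation lifted to nonempty lists of regexps. -/
inductive RAntimLN (I : α → α → Prop) (N : ℕ) :
    List (RegularExpression α) → α → List (RegularExpression α) → Prop
  | split {Γ Δ : List (RegularExpression α)} {E : RegularExpression α} {a El Er} :
      RAntim I E a El Er → Γ.length + Δ.length < N →
      RAntimLN I N (Γ ++ E :: Δ) a (Γ.map (Rexp I a) ++ El :: Er :: Δ)
  | dropL {Γ Δ : List (RegularExpression α)} {E : RegularExpression α} {a El Er} :
      RAntim I E a El Er → [] ∈ El.matches' → Γ ≠ [] →
      RAntimLN I N (Γ ++ E :: Δ) a (Γ.map (Rexp I a) ++ Er :: Δ)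
  | dropR {Γ Δ : List (RegularExpression α)} {E : RegularExpression α} {a El Er} :
      RAntim I E a El Er → [] ∈ Er.matches' → Δ ≠ [] →
      RAntimLN I N (Γ ++ E :: Δ) a (Γ.map (Rexp I a) ++ El :: Δ)
  | dropBoth {Γ Δ : List (RegularExpression α)} {E : RegularExpression α} {a El Er} :
      RAntim I E a El Er → [] ∈ El.matches' → [] ∈ Er.matches' → Γ ≠ [] → Δ ≠ [] →
      RAntimLN I N (Γ ++ E :: Δ) a (Γ.map (Rexp I a) ++ Δ)

/-- N-bounded refined Antimirov relation along a word. -/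
inductive RAntimWN (I : α → α → Prop) (N : ℕ) :
    RegularExpression α → List α → List (RegularExpression α) → Prop
  | nil (E : RegularExpression α) : RAntimWN I N E [] [E]
  | snoc {E : RegularExpression α} {u Γ a Γ'} :
      RAntimWN I N E u Γ → RAntimLN I N Γ a Γ' → RAntimWN I N E (u ++ [a]) Γ'


/-!
Soundness: a step `Γ ⇒ (a; Γ')` can be undone on words. If `Γ'` matches words `vs'`, the letter
`a` commutes with everything matched by the reorderable parts `R_a`, so `a :: flatten vs'` is
trace equivalent to the flattening of words matching `Γ`; iterating from `[E]` lands in `⟦E⟧`.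

Completeness: if `u ∼ z ∈ ⟦E⟧`, read `u` letter by letter, keeping words `ts` that match the
current configuration and whose flattening is trace equivalent to the unread part of `u`. The next
letter `a` occurs in `flatten ts` preceded only by letters independent of `a` (a property stable
under trace equivalence); the component containing it determines the step. A component is dropped
only when its word has become empty and it is not at an end, so all inner words stay nonempty;
once everything is read all words are empty, hence there are at most, and so exactly, two
components.
-/

namespace List

theorem append_eq_append_cons_iff {e f p s : List α} {a : α} :
    e ++ f = p ++ a :: s ↔
      (∃ m, e = p ++ a :: m ∧ s = m ++ f) ∨ ∃ m, p = e ++ m ∧ f = m ++ a :: s := by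
  rw [append_eq_append_iff]
  constructor
  · rintro (⟨m, hp, hf⟩ | ⟨m, he, hm⟩)
    · exact .inr ⟨m, hp, hf⟩
    · rcases cons_eq_append_iff.1 hm with ⟨rfl, rfl⟩ | ⟨m', rfl, rfl⟩
      · exact .inr ⟨[], by simpa using he.symm, rfl⟩
      · exact .inl ⟨m', he, rfl⟩
  · rintro (⟨m, rfl, rfl⟩ | ⟨m, rfl, rfl⟩)
    · exact .inr ⟨a :: m, rfl, rfl⟩
    · exact .inl ⟨m, rfl, rfl⟩

theorem flatten_eq_append_cons {ts : List (List α)} {x y : List α} {a : α}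
    (h : ts.flatten = x ++ a :: y) :
    ∃ ts₁ p s ts₂, ts = ts₁ ++ (p ++ a :: s) :: ts₂ ∧ x = ts₁.flatten ++ p ∧
      y = s ++ ts₂.flatten := by
  rcases flatten_eq_append_iff.1 h with
    ⟨ts₁, ts₂, rfl, rfl, h₂⟩ | ⟨ts₁, p, c, s, ts₂, rfl, rfl, h₂⟩
  · obtain ⟨nils, s, ts₃, rfl, hnils, rfl⟩ := flatten_eq_cons_iff.1 h₂.symm
    refine ⟨ts₁ ++ nils, [], s, ts₃, by simp, ?_, by simp⟩
    simp [flatten_eq_nil_iff.2 hnils]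
  · obtain ⟨rfl, rfl⟩ := cons_eq_cons.1 h₂
    exact ⟨ts₁, p, s, ts₂, rfl, rfl, rfl⟩

theorem forall₂_append_right_iff {β : Type*} {R : α → β → Prop} {l : List α}
    {l₁ l₂ : List β} :
    Forall₂ R l (l₁ ++ l₂) ↔ ∃ k₁ k₂, l = k₁ ++ k₂ ∧ Forall₂ R k₁ l₁ ∧ Forall₂ R k₂ l₂ := by
  refine ⟨fun h => ⟨_, _, (take_append_drop l₁.length l).symm,
    forall₂_take_append l l₁ l₂ h, forall₂_drop_append l l₁ l₂ h⟩, ?_⟩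
  rintro ⟨k₁, k₂, rfl, h₁, h₂⟩
  exact rel_append h₁ h₂

theorem forall₂_append_left_iff {β : Type*} {R : α → β → Prop} {l₁ l₂ : List α}
    {l : List β} :
    Forall₂ R (l₁ ++ l₂) l ↔ ∃ k₁ k₂, l = k₁ ++ k₂ ∧ Forall₂ R l₁ k₁ ∧ Forall₂ R l₂ k₂ := by
  refine ⟨fun h => ?_, fun ⟨k₁, k₂, hl, h₁, h₂⟩ => hl ▸ rel_append h₁ h₂⟩
  obtain ⟨k₁, k₂, rfl, h₁, h₂⟩ := forall₂_append_right_iff.1 (Forall₂.flip (R := flip R) h)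
  exact ⟨k₁, k₂, rfl, h₁.flip, h₂.flip⟩

theorem Forall₂.exists_of_mem_right {β : Type*} {R : α → β → Prop} {l₁ : List α}
    {l₂ : List β} (h : Forall₂ R l₁ l₂) {b : β} (hb : b ∈ l₂) : ∃ a ∈ l₁, R a b := by
  induction h with
  | nil => simp at hb
  | cons hab _ ih =>
    rcases mem_cons.1 hb with rfl | hb
    · exact ⟨_, mem_cons_self, hab⟩
    · obtain ⟨a, ha, hab⟩ := ih hb
      exact ⟨a, mem_cons_of_mem _ ha, hab⟩

end List

open List

abbrev WordsMatch (vs : List (List α)) (Γ : List (RegularExpression α)) : Prop :=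
  Forall₂ (fun v G => v ∈ G.matches') vs Γ

section

variable {I : α → α → Prop}

namespace TrEq

theorem append_left (w : List α) {u v : List α} (h : TrEq I u v) :
    TrEq I (w ++ u) (w ++ v) := by
  induction h with
  | swap x y hab => simpa [append_assoc] using swap (w ++ x) y hab
  | refl u => exact refl _
  | symm _ ih => exact ih.symm
  | trans _ _ ih₁ ih₂ => exact ih₁.trans ih₂

theorem length_eq {u v : List α} (h : TrEq I u v) : u.length = v.length := by
  induction h with
  | swap x y hab => simp
  | refl u => rfl
  | symm _ ih => exact ih.symm
  | trans _ _ ih₁ ih₂ => exact ih₁.trans ih₂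

theorem eq_nil_of_nil {v : List α} (h : TrEq I [] v) : v = [] :=
  length_eq_zero_iff.1 h.length_eq.symm

theorem cons_append_append_cons {a : α} :
    ∀ (w : List α), (∀ b ∈ w, I a b) → ∀ r, TrEq I (a :: (w ++ r)) (w ++ a :: r)
  | [], _, r => refl _
  | b :: w, hw, r => by
    have hab : TrEq I (a :: b :: (w ++ r)) (b :: a :: (w ++ r)) := by
      simpa using swap (I := I) [] (w ++ r) (hw b mem_cons_self)
    have hw' : ∀ c ∈ w, I a c := fun c hc => hw c (mem_cons_of_mem b hc)
    exact hab.trans ((cons_append_append_cons w hw' r).append_left [b])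

end TrEq

theorem mem_matches'_rexp_iff {a : α} {E : RegularExpression α} {w : List α} :
    w ∈ (Rexp I a E).matches' ↔ w ∈ E.matches' ∧ ∀ b ∈ w, I a b := by
  induction E generalizing w with
  | zero => simp [Rexp]
  | epsilon => simp +contextual [Rexp]
  | char c => by_cases h : I a c <;> simp [Rexp, h] <;> rintro rfl <;> simpa
  | plus E F ihE ihF =>
    simp only [Rexp, plus_def, matches'_add, Language.mem_add, ihE, ihF]
    tauto
  | comp E F ihE ihF =>
    simp only [Rexp, comp_def, matches'_mul, Language.mem_mul, ihE, ihF]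
    constructor
    · rintro ⟨x, ⟨hx, hxI⟩, y, ⟨hy, hyI⟩, rfl⟩
      exact ⟨⟨x, hx, y, hy, rfl⟩, by simp_all [or_imp]⟩
    · rintro ⟨⟨x, hx, y, hy, rfl⟩, hI⟩
      simp only [mem_append, or_imp, forall_and] at hI
      exact ⟨x, ⟨hx, hI.1⟩, y, ⟨hy, hI.2⟩, rfl⟩
  | star E ih =>
    simp only [Rexp, matches'_star, Language.mem_kstar, ih]
    constructor
    · rintro ⟨S, rfl, hS⟩
      exact ⟨⟨S, rfl, fun y hy => (hS y hy).1⟩, fun b hb =>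
        let ⟨y, hy, hby⟩ := mem_flatten.1 hb; (hS y hy).2 b hby⟩
    · rintro ⟨⟨S, rfl, hS⟩, hI⟩
      exact ⟨S, rfl, fun y hy => ⟨hS y hy, fun b hb => hI b (mem_flatten.2 ⟨y, hy, hb⟩)⟩⟩

namespace RAntim

theorem append_cons_mem {a : α} {E El Er : RegularExpression α} (h : RAntim I E a El Er)
    {vl vr : List α} (hl : vl ∈ El.matches') (hr : vr ∈ Er.matches') :
    vl ++ a :: vr ∈ E.matches' ∧ ∀ b ∈ vl, I a b := by
  induction h generalizing vl vr with
  | chr c =>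
    simp only [one_def, matches'_epsilon, Language.mem_one] at hl hr
    subst hl hr
    exact ⟨rfl, by simp⟩
  | plusL _ ih => exact ⟨.inl (ih hl hr).1, (ih hl hr).2⟩
  | plusR _ ih => exact ⟨.inr (ih hl hr).1, (ih hl hr).2⟩
  | @compL E F b El Er _ ih =>
    obtain ⟨x, hx, y, hy, rfl⟩ := hr
    obtain ⟨hmem, hI⟩ := ih hl hx
    exact ⟨⟨vl ++ b :: x, hmem, y, hy, by simp⟩, hI⟩
  | @compR E F b Fl Fr _ ih =>
    obtain ⟨e, he, l, hl, rfl⟩ := hl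
    obtain ⟨he, heI⟩ := mem_matches'_rexp_iff.1 he
    obtain ⟨hmem, hI⟩ := ih hl hr
    exact ⟨⟨e, he, l ++ b :: vr, hmem, by simp⟩, by simp_all [or_imp]⟩
  | @st E b El Er _ ih =>
    obtain ⟨w, hw, l, hl, rfl⟩ := hl
    obtain ⟨r, hr, t, ht, rfl⟩ := hr
    obtain ⟨hmem, hI⟩ := ih hl hr
    obtain ⟨S, rfl, hS⟩ := Language.mem_kstar.1 hw
    obtain ⟨T, rfl, hT⟩ := Language.mem_kstar.1 ht
    have hS' := fun y hy => mem_matches'_rexp_iff.1 (hS y hy)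
    refine ⟨Language.mem_kstar.2 ⟨S ++ (l ++ b :: r) :: T, by simp, ?_⟩, ?_⟩
    · simp only [mem_append, mem_cons]
      rintro y (hy | rfl | hy)
      exacts [(hS' y hy).1, hmem, hT y hy]
    · simp only [mem_append, mem_flatten]
      rintro c (⟨y, hy, hc⟩ | hc)
      exacts [(hS' y hy).2 c hc, hI c hc]

theorem exists_of_append_cons_mem {a : α} {E : RegularExpression α} {p s : List α}
    (h : p ++ a :: s ∈ E.matches') (hp : ∀ b ∈ p, I a b) :
    ∃ El Er, RAntim I E a El Er ∧ p ∈ El.matches' ∧ s ∈ Er.matches' := by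
  induction E generalizing p s with
  | zero => exact absurd h (Language.notMem_zero _)
  | epsilon => simp at h
  | char c =>
    replace h : p ++ a :: s = [c] := h
    obtain ⟨rfl, rfl, rfl⟩ : p = [] ∧ a = c ∧ s = [] := by
      rcases p with _ | ⟨b, p⟩ <;> simp_all
    exact ⟨1, 1, chr a, rfl, rfl⟩
  | plus E F ihE ihF =>
    rcases h with h | h
    · obtain ⟨El, Er, hE, hl, hr⟩ := ihE h hp
      exact ⟨El, Er, plusL hE, hl, hr⟩
    · obtain ⟨Fl, Fr, hF, hl, hr⟩ := ihF h hp
      exact ⟨Fl, Fr, plusR hF, hl, hr⟩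
  | comp E F ihE ihF =>
    obtain ⟨e, he, f, hf, hef⟩ := h
    rcases append_eq_append_cons_iff.1 hef with ⟨m, rfl, rfl⟩ | ⟨m, rfl, rfl⟩
    · obtain ⟨El, Er, hE, hl, hr⟩ := ihE he hp
      exact ⟨El, comp Er F, compL hE, hl, m, hr, f, hf, rfl⟩
    · simp only [mem_append, or_imp, forall_and] at hp
      obtain ⟨Fl, Fr, hF, hl, hr⟩ := ihF hf hp.2
      have he' : e ∈ (Rexp I a E).matches' := mem_matches'_rexp_iff.2 ⟨he, hp.1⟩
      exact ⟨comp (Rexp I a E) Fl, Fr, compR hF, ⟨e, he', m, hl, rfl⟩, hr⟩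
  | star E ih =>
    obtain ⟨S, hS, hSE⟩ := Language.mem_kstar.1 h
    obtain ⟨S₁, q, r, S₂, rfl, rfl, rfl⟩ := flatten_eq_append_cons hS.symm
    simp only [mem_append, mem_cons, or_imp, forall_and, forall_eq] at hSE
    simp only [mem_append, mem_flatten, or_imp, forall_and, forall_exists_index, and_imp] at hp
    obtain ⟨El, Er, hE, hl, hr⟩ := ih hSE.2.1 hp.2
    refine ⟨comp (star (Rexp I a E)) El, comp Er (star E), st hE, ⟨S₁.flatten, ?_, q, hl, rfl⟩,
      ⟨r, hr, S₂.flatten, Language.join_mem_kstar hSE.2.2, rfl⟩⟩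
    exact Language.join_mem_kstar fun y hy =>
      mem_matches'_rexp_iff.2 ⟨hSE.1 y hy, fun b hb => hp.1 b y hy hb⟩

end RAntim

theorem wordsMatch_map_rexp_iff {a : α} {ws : List (List α)} {Γ : List (RegularExpression α)} :
    WordsMatch ws (Γ.map (Rexp I a)) ↔ WordsMatch ws Γ ∧ ∀ b ∈ ws.flatten, I a b := by
  induction ws generalizing Γ with
  | nil => simp
  | cons w ws ih =>
    cases Γ with
    | nil => simp
    | cons G Γ =>
      simp only [map_cons, forall₂_cons, ih, mem_matches'_rexp_iff, flatten_cons, mem_append,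
        or_imp, forall_and]
      tauto

-- Each of the four rules of `RAntimL` reduces to this, a dropped component contributing `[]`.
theorem RAntim.exists_wordsMatch_cons_trEq {a : α} {E El Er : RegularExpression α}
    {Γ Δ : List (RegularExpression α)} (h : RAntim I E a El Er) {ws us : List (List α)}
    {vl vr : List α} (hws : WordsMatch ws (Γ.map (Rexp I a)))
    (hl : vl ∈ El.matches') (hr : vr ∈ Er.matches') (hus : WordsMatch us Δ) :
    ∃ vs, WordsMatch vs (Γ ++ E :: Δ) ∧
      TrEq I (a :: (ws.flatten ++ vl ++ vr ++ us.flatten)) vs.flatten := by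
  obtain ⟨hws, hwsI⟩ := wordsMatch_map_rexp_iff.1 hws
  obtain ⟨hmem, hlI⟩ := h.append_cons_mem hl hr
  refine ⟨ws ++ (vl ++ a :: vr) :: us, rel_append hws (.cons hmem hus), ?_⟩
  have hI : ∀ b ∈ ws.flatten ++ vl, I a b := by
    simp only [mem_append]
    rintro b (hb | hb)
    exacts [hwsI b hb, hlI b hb]
  simpa using TrEq.cons_append_append_cons _ hI (vr ++ us.flatten)

theorem RAntimL.exists_wordsMatch_trEq {Γ Γ' : List (RegularExpression α)} {a : α}
    (h : RAntimL I Γ a Γ') {vs' : List (List α)} (hvs' : WordsMatch vs' Γ') :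
    ∃ vs, WordsMatch vs Γ ∧ TrEq I (a :: vs'.flatten) vs.flatten := by
  cases h with
  | split hE =>
    obtain ⟨ws, rest, rfl, hws, hrest⟩ := forall₂_append_right_iff.1 hvs'
    obtain ⟨vl, rest', hl, hrest', rfl⟩ := forall₂_cons_right_iff.1 hrest
    obtain ⟨vr, us, hr, hus, rfl⟩ := forall₂_cons_right_iff.1 hrest'
    simpa using hE.exists_wordsMatch_cons_trEq hws hl hr hus
  | dropL hE hl _ =>
    obtain ⟨ws, rest, rfl, hws, hrest⟩ := forall₂_append_right_iff.1 hvs'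
    obtain ⟨vr, us, hr, hus, rfl⟩ := forall₂_cons_right_iff.1 hrest
    simpa using hE.exists_wordsMatch_cons_trEq hws hl hr hus
  | dropR hE hr _ =>
    obtain ⟨ws, rest, rfl, hws, hrest⟩ := forall₂_append_right_iff.1 hvs'
    obtain ⟨vl, us, hl, hus, rfl⟩ := forall₂_cons_right_iff.1 hrest
    simpa using hE.exists_wordsMatch_cons_trEq hws hl hr hus
  | dropBoth hE hl hr _ _ =>
    obtain ⟨ws, us, rfl, hws, hus⟩ := forall₂_append_right_iff.1 hvs'
    simpa using hE.exists_wordsMatch_cons_trEq hws hl hr hus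

theorem RAntimW.exists_mem_trEq {E : RegularExpression α} {u : List α}
    {Γ : List (RegularExpression α)} (h : RAntimW I E u Γ) {vs : List (List α)}
    (hvs : WordsMatch vs Γ) : ∃ z ∈ E.matches', TrEq I (u ++ vs.flatten) z := by
  induction h generalizing vs with
  | nil =>
    obtain ⟨v, _, hv, hnil, rfl⟩ := forall₂_cons_right_iff.1 hvs
    obtain rfl := forall₂_nil_right_iff.1 hnil
    exact ⟨v, hv, by simpa using TrEq.refl v⟩
  | @snoc u Γ a Γ' _ hstep ih =>
    obtain ⟨vs₀, hvs₀, hstep⟩ := hstep.exists_wordsMatch_trEq hvs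
    obtain ⟨z, hz, hzu⟩ := ih hvs₀
    exact ⟨z, hz, by simpa using (hstep.append_left u).trans hzu⟩

-- A witness of `a :: w ∼ v` that locates the letter `a` inside `v` itself.
def PeelsTo (I : α → α → Prop) (v : List α) (a : α) (w : List α) : Prop :=
  ∃ x y, v = x ++ a :: y ∧ (∀ b ∈ x, I a b) ∧ TrEq I w (x ++ y)

theorem PeelsTo.swap {a c d : α} {x₀ y₀ w : List α} (hcd : I c d)
    (h : PeelsTo I (x₀ ++ [c, d] ++ y₀) a w) : PeelsTo I (x₀ ++ [d, c] ++ y₀) a w := by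
  obtain ⟨x, y, hv, hx, hw⟩ := h
  rw [append_assoc, cons_append, cons_append, nil_append] at hv
  rcases append_eq_append_cons_iff.1 hv with ⟨m, rfl, rfl⟩ | ⟨m, rfl, hm⟩
  · refine ⟨x, m ++ d :: c :: y₀, by simp, hx, hw.trans ?_⟩
    simpa using TrEq.swap (x ++ m) y₀ hcd
  rcases cons_eq_append_iff.1 hm with ⟨rfl, hy⟩ | ⟨m', rfl, hm'⟩
  · obtain ⟨rfl, rfl⟩ := cons_eq_cons.1 hy
    refine ⟨x₀ ++ [d], y₀, by simp, ?_, by simpa using hw⟩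
    simpa [or_imp, forall_and, hcd] using hx
  rcases cons_eq_append_iff.1 hm' with ⟨rfl, hy⟩ | ⟨m'', rfl, rfl⟩
  · obtain ⟨rfl, rfl⟩ := cons_eq_cons.1 hy
    exact ⟨x₀, c :: y, by simp, fun b hb => hx b (by simp [hb]), by simpa using hw⟩
  · refine ⟨x₀ ++ d :: c :: m'', y, by simp, fun b hb => hx b (by simp_all; tauto),
      hw.trans ?_⟩
    simpa using TrEq.swap x₀ (m'' ++ y) hcd

theorem peelsTo_iff_of_trEq (hsym : ∀ ⦃b c⦄, I b c → I c b) {u v : List α}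
    (h : TrEq I u v) {a : α} {w : List α} : PeelsTo I u a w ↔ PeelsTo I v a w := by
  induction h with
  | swap x y hab => exact ⟨PeelsTo.swap hab, PeelsTo.swap (hsym hab)⟩
  | refl u => rfl
  | symm _ ih => exact ih.symm
  | trans _ _ ih₁ ih₂ => exact ih₁.trans ih₂

def InteriorNeNil (ts : List (List α)) : Prop :=
  ∀ t ∈ ts.tail.dropLast, t ≠ []

namespace InteriorNeNil

theorem singleton (t : List α) : InteriorNeNil [t] := by
  simp [InteriorNeNil]

theorem length_le_two {ts : List (List α)} (h : InteriorNeNil ts) (hnil : ∀ t ∈ ts, t = []) :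
    ts.length ≤ 2 := by
  match ts, h, hnil with
  | [], _, _ | [_], _, _ | [_, _], _, _ => simp
  | _ :: t :: _ :: _, h, hnil => exact absurd (hnil t (by simp)) (h t (by simp))

theorem replace_two {l r : List (List α)} {m p s : List α} (h : InteriorNeNil (l ++ m :: r))
    (hp : p ≠ [] ∨ l = []) (hs : s ≠ [] ∨ r = []) : InteriorNeNil (l ++ p :: s :: r) := by
  rcases l with _ | ⟨x, l⟩ <;> rcases r.eq_nil_or_concat with rfl | ⟨r, y, rfl⟩ <;>
    simp_all [InteriorNeNil, dropLast_cons_of_ne_nil, or_imp, forall_and]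

theorem replace_one {l r : List (List α)} {m q : List α} (h : InteriorNeNil (l ++ m :: r))
    (hq : q ≠ [] ∨ l = [] ∨ r = []) : InteriorNeNil (l ++ q :: r) := by
  rcases l with _ | ⟨x, l⟩ <;> rcases r.eq_nil_or_concat with rfl | ⟨r, y, rfl⟩ <;>
    simp_all [InteriorNeNil, dropLast_cons_of_ne_nil, or_imp, forall_and]

theorem erase {l r : List (List α)} {m : List α} (h : InteriorNeNil (l ++ m :: r)) :
    InteriorNeNil (l ++ r) := by
  rcases l with _ | ⟨x, l⟩ <;> rcases r.eq_nil_or_concat with rfl | ⟨r, y, rfl⟩ <;>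
    simp_all [InteriorNeNil, dropLast_cons_of_ne_nil, or_imp, forall_and, ← tail_dropLast] <;>
    first
    | exact fun t ht => h t (mem_of_mem_tail ht)
    | exact fun t ht => h t (mem_of_mem_dropLast ht)

end InteriorNeNil

theorem exists_rAntimL_of_peelsTo {Γ : List (RegularExpression α)} {ts : List (List α)} {a : α}
    {w : List α} (hpeel : PeelsTo I ts.flatten a w) (hts : WordsMatch ts Γ)
    (hint : InteriorNeNil ts) :
    ∃ Γ' ts', RAntimL I Γ a Γ' ∧ WordsMatch ts' Γ' ∧ InteriorNeNil ts' ∧ TrEq I w ts'.flatten := by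
  obtain ⟨x, y, hxy, hxI, hw⟩ := hpeel
  obtain ⟨ts₁, p, s, ts₂, rfl, rfl, rfl⟩ := flatten_eq_append_cons hxy
  obtain ⟨Γ₁, Γ₂', rfl, h₁, h₂'⟩ := forall₂_append_left_iff.1 hts
  obtain ⟨G, Γ₂, hG, h₂, rfl⟩ := forall₂_cons_left_iff.1 h₂'
  simp only [mem_append, or_imp, forall_and] at hxI
  obtain ⟨El, Er, hE, hl, hr⟩ := RAntim.exists_of_append_cons_mem hG hxI.2
  have h₁' := wordsMatch_map_rexp_iff.2 ⟨h₁, hxI.1⟩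
  have hne₁ : ts₁ ≠ [] → Γ₁ ≠ [] := by rintro hts₁ rfl; exact hts₁ (forall₂_nil_right_iff.1 h₁)
  have hne₂ : ts₂ ≠ [] → Γ₂ ≠ [] := by rintro hts₂ rfl; exact hts₂ (forall₂_nil_right_iff.1 h₂)
  by_cases hL : p = [] ∧ ts₁ ≠ [] <;> by_cases hR : s = [] ∧ ts₂ ≠ []
  · obtain ⟨rfl, hts₁⟩ := hL
    obtain ⟨rfl, hts₂⟩ := hR
    exact ⟨_, ts₁ ++ ts₂, .dropBoth hE hl hr (hne₁ hts₁) (hne₂ hts₂), rel_append h₁' h₂,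
      hint.erase, by simpa using hw⟩
  · obtain ⟨rfl, hts₁⟩ := hL
    exact ⟨_, ts₁ ++ s :: ts₂, .dropL hE hl (hne₁ hts₁), rel_append h₁' (.cons hr h₂),
      hint.replace_one (by tauto), by simpa using hw⟩
  · obtain ⟨rfl, hts₂⟩ := hR
    exact ⟨_, ts₁ ++ p :: ts₂, .dropR hE hr (hne₂ hts₂), rel_append h₁' (.cons hl h₂),
      hint.replace_one (by tauto), by simpa using hw⟩
  · exact ⟨_, ts₁ ++ p :: s :: ts₂, .split hE, rel_append h₁' (.cons hl (.cons hr h₂)),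
      hint.replace_two (by tauto) (by tauto), by simpa using hw⟩

theorem RAntimW.exists_nullable_of_trEq (hsym : ∀ ⦃b c⦄, I b c → I c b)
    {E : RegularExpression α} (u : List α) {v : List α} {Γ : List (RegularExpression α)}
    {ts : List (List α)} (hv : RAntimW I E v Γ) (hu : TrEq I u ts.flatten)
    (hts : WordsMatch ts Γ) (hint : InteriorNeNil ts) :
    ∃ Γ', RAntimW I E (v ++ u) Γ' ∧ (∀ G ∈ Γ', [] ∈ G.matches') ∧ Γ'.length ≤ 2 := by
  induction u generalizing v Γ ts with
  | nil =>
    have hnil : ∀ t ∈ ts, t = [] := flatten_eq_nil_iff.1 hu.eq_nil_of_nil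
    refine ⟨Γ, by simpa using hv, fun G hG => ?_, hts.length_eq ▸ hint.length_le_two hnil⟩
    obtain ⟨t, ht, htG⟩ := hts.exists_of_mem_right hG
    exact hnil t ht ▸ htG
  | cons a u ih =>
    have hpeel : PeelsTo I ts.flatten a u :=
      (peelsTo_iff_of_trEq hsym hu).1 ⟨[], u, rfl, by simp, .refl u⟩
    obtain ⟨Γ', ts', hstep, hts', hint', hu'⟩ := exists_rAntimL_of_peelsTo hpeel hts hint
    simpa using ih (hv.snoc hstep) hu' hts' hint'

theorem RAntimW.two_le_length {E : RegularExpression α} {u : List α}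
    {Γ : List (RegularExpression α)} (h : RAntimW I E u Γ) (hu : u ≠ []) : 2 ≤ Γ.length := by
  cases h with
  | nil => exact absurd rfl hu
  | snoc _ hstep => cases hstep <;> simp_all [← length_pos_iff] <;> omega

end

theorem stmt18_general {α : Type u} (I : α → α → Prop)
    (hsym : Symmetric I) (E : RegularExpression α) (u : List α) :
    u ∈ TrClosure I E.matches' ↔
      (u = [] ∧ [] ∈ E.matches') ∨
      (u ≠ [] ∧ ∃ E0 E1, RAntimW I E u [E0, E1] ∧
        [] ∈ E0.matches' ∧ [] ∈ E1.matches') := by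
  constructor
  · rintro ⟨z, hz, hu⟩
    rcases eq_or_ne u [] with rfl | hu₀
    · exact .inl ⟨rfl, hu.eq_nil_of_nil ▸ hz⟩
    obtain ⟨Γ, hΓ, hnull, hlen⟩ := RAntimW.exists_nullable_of_trEq hsym u (.nil E)
      (ts := [z]) (by simpa using hu) (.cons hz .nil) (.singleton z)
    obtain ⟨E0, E1, rfl⟩ := length_eq_two.1 (hlen.antisymm (hΓ.two_le_length hu₀))
    exact .inr ⟨hu₀, E0, E1, by simpa using hΓ, hnull E0 (by simp), hnull E1 (by simp)⟩
  · rintro (⟨rfl, hnil⟩ | ⟨-, E0, E1, hw, h0, h1⟩)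
    · exact ⟨[], hnil, .refl []⟩
    · obtain ⟨z, hz, hu⟩ := hw.exists_mem_trEq (.cons h0 (.cons h1 .nil))
      exact ⟨z, hz, by simpa using hu⟩

/-- the refined Antimirov automaton accepts the trace closure. -/
theorem stmt18 {α : Type u} [Fintype α] (I : α → α → Prop)
    (hirr : Irreflexive I) (hsym : Symmetric I) (E : RegularExpression α) (u : List α) :
    u ∈ TrClosure I E.matches' ↔
      (u = [] ∧ [] ∈ E.matches') ∨
      (u ≠ [] ∧ ∃ E0 E1, RAntimW I E u [E0, E1] ∧
        [] ∈ E0.matches' ∧ [] ∈ E1.matches') :=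
  stmt18_general I hsym E u
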